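/- For a set Σ of TGDs, a database D, and a Boolean conjunctive query q: D ∪ Σ ⊨ q if and only if chase(D,Σ) ⊨ q (soundness and completeness of the chase for CQ-answering). -/

import Mathlib

set_option maxHeartbeats 1000000

/-- Terms: constants, nulls, and Skolem nulls `sk i v ts` determined by a
rule index `i`, an existential variable `v`, and the frontier terms `ts`. -/
inductive NTerm : Type where
  | const : ℕ → NTerm
  | null : ℕ → NTerm
  | sk : ℕ → ℕ → List NTerm → NTerm

/-- A fact: a relation symbol applied to a list of (ground) terms. -/
structure DFact : Type where
  rel : ℕ
  args : List NTerm

/-- A (query or rule) atom: `Sum.inl v` is a variable, `Sum.inr c` a constant. -/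
structure Atom : Type where
  rel : ℕ
  args : List (ℕ ⊕ ℕ)

/-- Apply a substitution (assignment of terms to variables) to an atom. -/
def applyAtom (h : ℕ → NTerm) (a : Atom) : DFact :=
  ⟨a.rel, a.args.map fun t => match t with
    | Sum.inl v => h v
    | Sum.inr c => NTerm.const c⟩

def mapDFact (g : NTerm → NTerm) (f : DFact) : DFact :=
  ⟨f.rel, f.args.map g⟩

/-- Active domain of an instance: all terms occurring in it. -/
def adom (I : Set DFact) : Set NTerm := { t | ∃ f ∈ I, t ∈ f.args }

/-- A `C`-homomorphism from `I` to `J`: maps the facts of `I` into `J`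
and fixes every constant in `C`. -/
def IsHom (C : Set ℕ) (g : NTerm → NTerm) (I J : Set DFact) : Prop :=
  (∀ f ∈ I, mapDFact g f ∈ J) ∧ ∀ c ∈ C, g (NTerm.const c) = NTerm.const c

/-- A Boolean conjunctive query: a finite conjunction of atoms,
all variables read existentially. -/
abbrev BCQ := List Atom

/-- `I ⊨ q`: some substitution maps the atoms of `q` into `I` (fixing constants). -/
def satCQ (I : Set DFact) (q : BCQ) : Prop :=
  ∃ h : ℕ → NTerm, ∀ a ∈ q, applyAtom h a ∈ I

def cqConsts (q : BCQ) : Set ℕ := { c | ∃ a ∈ q, Sum.inr c ∈ a.args }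

def cqVars (q : BCQ) : Set ℕ := { v | ∃ a ∈ q, Sum.inl v ∈ a.args }

/-- A database: a finite instance containing no nulls. -/
def IsDatabase (D : Set DFact) : Prop :=
  D.Finite ∧ ∀ f ∈ D, ∀ t ∈ f.args, ∃ c, t = NTerm.const c

def constsOf (I : Set DFact) : Set ℕ := { c | NTerm.const c ∈ adom I }

/-- A TGD `∀x∀y (body → ∃z head)`; existential variables are the head
variables not occurring in the body. -/
structure TGD : Type where
  body : List Atom
  head : List Atom

def atomVars (a : Atom) : List ℕ :=
  a.args.filterMap fun t => match t with
    | Sum.inl v => some v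
    | Sum.inr _ => none

def TGD.bodyVars (σ : TGD) : List ℕ :=
  σ.body.foldr (fun a r => atomVars a ++ r) []

def TGD.frontier (σ : TGD) : List ℕ :=
  ((σ.head.foldr (fun a r => atomVars a ++ r) []).filter (fun u => u ∈ σ.bodyVars))

/-- Extend `h` by sending each existential variable `v` of the `i`-th rule `σ`
to the Skolem null determined by `(i, h(frontier σ), v)`. -/
def skolemSub (i : ℕ) (σ : TGD) (h : ℕ → NTerm) : ℕ → NTerm := fun v =>
  if v ∈ σ.bodyVars then h v
  else NTerm.sk i v (σ.frontier.map h)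

/-- `I` is a model of the TGD `σ`. -/
def modelsTGD (I : Set DFact) (σ : TGD) : Prop :=
  ∀ h : ℕ → NTerm, (∀ a ∈ σ.body, applyAtom h a ∈ I) →
    ∃ h' : ℕ → NTerm, (∀ v ∈ σ.bodyVars, h' v = h v) ∧
      ∀ a ∈ σ.head, applyAtom h' a ∈ I

/-- `D ∪ Σ ⊨ q` for a Boolean CQ `q`. -/
def entailsCQ (Sg : List TGD) (D : Set DFact) (q : BCQ) : Prop :=
  ∀ I : Set DFact, D ⊆ I → (∀ σ ∈ Sg, modelsTGD I σ) → satCQ I q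

/-- One step of the oblivious Skolem chase. -/
def chaseStep (Sg : List TGD) (I : Set DFact) : Set DFact :=
  I ∪ { f | ∃ i σ, Sg[i]? = some σ ∧ ∃ h : ℕ → NTerm,
        (∀ a ∈ σ.body, applyAtom h a ∈ I) ∧
        ∃ a ∈ σ.head, f = applyAtom (skolemSub i σ h) a }

def chaseK (Sg : List TGD) (D : Set DFact) : ℕ → Set DFact
  | 0 => D
  | k + 1 => chaseStep Sg (chaseK Sg D k)

def chase (Sg : List TGD) (D : Set DFact) : Set DFact := ⋃ k, chaseK Sg D k

lemma map_eq_map_forall {α β : Type*} {l : List α} {f g : α → β}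
    (h : l.map f = l.map g) : ∀ a ∈ l, f a = g a := by
  induction l with
  | nil => simp
  | cons x xs ih => simp_all

lemma mem_foldrVars {v : ℕ} {a : Atom} {l : List Atom} (hv : v ∈ atomVars a) (ha : a ∈ l) :
    v ∈ l.foldr (fun a r => atomVars a ++ r) [] := by
  induction l with
  | nil => simp at ha
  | cons x xs ih =>
    rcases List.mem_cons.1 ha with rfl | h
    · exact List.mem_append.2 (Or.inl hv)
    · exact List.mem_append.2 (Or.inr (ih h))

lemma mem_frontier_iff {σ : TGD} {v : ℕ} :
    v ∈ σ.frontier ↔ v ∈ σ.head.foldr (fun a r => atomVars a ++ r) [] ∧ v ∈ σ.bodyVars := by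
  simp [TGD.frontier, List.mem_filter]
  exact ⟨fun ⟨a, ha, h1, h2⟩ => ⟨⟨a, ha, h1⟩, h2⟩, fun ⟨⟨a, ha, h1⟩, h2⟩ => ⟨a, ha, h1, h2⟩⟩

lemma chaseK_mono (Sg : List TGD) (D : Set DFact) {k m : ℕ} (h : k ≤ m) :
    chaseK Sg D k ⊆ chaseK Sg D m := by
  induction h with
  | refl => exact subset_rfl
  | step _ ih => exact ih.trans (Set.subset_union_left)

lemma exists_chase_bound (Sg : List TGD) (D : Set DFact) (h : ℕ → NTerm) (l : List Atom)
    (H : ∀ a ∈ l, applyAtom h a ∈ chase Sg D) :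
    ∃ N, ∀ a ∈ l, applyAtom h a ∈ chaseK Sg D N := by
  induction l with
  | nil => exact ⟨0, by simp⟩
  | cons x xs ih =>
    obtain ⟨N, hN⟩ := ih fun a ha => H a (List.mem_cons_of_mem _ ha)
    obtain ⟨k, hk⟩ : ∃ k, applyAtom h x ∈ chaseK Sg D k := by
      have := H x List.mem_cons_self
      simpa [chase, Set.mem_iUnion] using this
    refine ⟨max N k, fun a ha => ?_⟩
    rcases List.mem_cons.1 ha with rfl | ha
    · exact chaseK_mono Sg D (le_max_right _ _) hk
    · exact chaseK_mono Sg D (le_max_left _ _) (hN a ha)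

lemma mapDFact_applyAtom (g : NTerm → NTerm) (hg : ∀ c, g (NTerm.const c) = NTerm.const c)
    (h : ℕ → NTerm) (a : Atom) :
    mapDFact g (applyAtom h a) = applyAtom (fun v => g (h v)) a := by
  unfold mapDFact applyAtom
  simp only [List.map_map]
  congr 1
  apply List.map_congr_left
  intro t _
  cases t <;> simp [hg]

def WProp (Sg : List TGD) (I : Set DFact) (i : ℕ) (ts : List NTerm) (h' : ℕ → NTerm) : Prop :=
  ∃ σ, Sg[i]? = some σ ∧ σ.frontier.map h' = ts ∧ ∀ a ∈ σ.head, applyAtom h' a ∈ I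

open Classical in
noncomputable def chooseW (Sg : List TGD) (I : Set DFact) (i : ℕ) (ts : List NTerm) :
    ℕ → NTerm :=
  if h : ∃ h', WProp Sg I i ts h' then h.choose else fun _ => NTerm.const 0

lemma chooseW_spec {Sg : List TGD} {I : Set DFact} {i : ℕ} {ts : List NTerm}
    (h : ∃ h', WProp Sg I i ts h') : WProp Sg I i ts (chooseW Sg I i ts) := by
  unfold chooseW
  rw [dif_pos h]
  exact h.choose_spec

noncomputable def gmap (Sg : List TGD) (I : Set DFact) : NTerm → NTerm
  | .const c => .const c
  | .null _ => .const 0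
  | .sk i v ts => chooseW Sg I i (ts.attach.map fun t => gmap Sg I t.1) v
decreasing_by
  simp_wf
  have := List.sizeOf_lt_of_mem t.2
  omega

lemma gmap_const (Sg : List TGD) (I : Set DFact) (c : ℕ) :
    gmap Sg I (.const c) = .const c := by simp [gmap]

lemma gmap_sk (Sg : List TGD) (I : Set DFact) (i v : ℕ) (ts : List NTerm) :
    gmap Sg I (.sk i v ts) = chooseW Sg I i (ts.map (gmap Sg I)) v := by
  rw [gmap]
  congr 1
  simp

lemma gmap_hom (Sg : List TGD) (D I : Set DFact) (hD : IsDatabase D) (hDI : D ⊆ I)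
    (hM : ∀ σ ∈ Sg, modelsTGD I σ) :
    ∀ k, ∀ f ∈ chaseK Sg D k, mapDFact (gmap Sg I) f ∈ I := by
  intro k
  induction k with
  | zero =>
    intro f hf
    have h1 : f.args.map (gmap Sg I) = f.args := by
      conv_rhs => rw [← List.map_id f.args]
      apply List.map_congr_left
      intro t ht
      obtain ⟨c, rfl⟩ := hD.2 f hf t ht
      simp [gmap_const]
    have : mapDFact (gmap Sg I) f = f := by simp [mapDFact, h1]
    rw [this]; exact hDI hf
  | succ k ih =>
    intro f hf
    simp only [chaseK, chaseStep, Set.mem_union, Set.mem_setOf_eq] at hf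
    rcases hf with hf | ⟨i, σ, hiσ, h, hbody, a, ha, rfl⟩
    · exact ih f hf
    have hσSg : σ ∈ Sg := by
      have := List.getElem?_eq_some_iff.1 hiσ
      obtain ⟨hlt, he⟩ := this
      exact he ▸ List.getElem_mem hlt
    set g := gmap Sg I with hgdef
    have hgc : ∀ c, g (NTerm.const c) = NTerm.const c := gmap_const Sg I
    have hbodyI : ∀ b ∈ σ.body, applyAtom (fun v => g (h v)) b ∈ I := by
      intro b hb
      rw [← mapDFact_applyAtom g hgc]
      exact ih _ (hbody b hb)
    obtain ⟨h', hh', hhead⟩ := hM σ hσSg _ hbodyI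
    have hfr : ∀ u ∈ σ.frontier, u ∈ σ.bodyVars := fun u hu => (mem_frontier_iff.1 hu).2
    have hts : σ.frontier.map h' = (σ.frontier.map h).map g := by
      rw [List.map_map]
      apply List.map_congr_left
      intro u hu
      exact hh' u (hfr u hu)
    have hex : ∃ h'', WProp Sg I i ((σ.frontier.map h).map g) h'' := ⟨h', σ, hiσ, hts, hhead⟩
    obtain ⟨σ', hσ', hc1, hc2⟩ := chooseW_spec hex
    rw [hiσ] at hσ'
    obtain rfl : σ = σ' := Option.some.inj hσ'
    set hc := chooseW Sg I i ((σ.frontier.map h).map g) with hcdef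
    rw [List.map_map] at hc1
    have hpt : ∀ u ∈ σ.frontier, hc u = g (h u) := map_eq_map_forall hc1
    have heq : mapDFact g (applyAtom (skolemSub i σ h) a) = applyAtom hc a := by
      rw [mapDFact_applyAtom g hgc]
      unfold applyAtom
      congr 1
      apply List.map_congr_left
      intro t ht
      cases t with
      | inr c => rfl
      | inl v =>
        simp only
        by_cases hv : v ∈ σ.bodyVars
        · have hvf : v ∈ σ.frontier := by
            refine mem_frontier_iff.2 ⟨mem_foldrVars ?_ ha, hv⟩
            exact List.mem_filterMap.2 ⟨Sum.inl v, ht, rfl⟩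
          rw [skolemSub]
          simp only [if_pos hv]
          exact (hpt v hvf).symm
        · rw [skolemSub]
          simp only [if_neg hv]
          rw [hgdef, gmap_sk]
    rw [heq]
    exact hc2 a ha

/-- soundness and completeness of the chase for CQ-answering:
`D ∪ Σ ⊨ q` iff `chase(D,Σ) ⊨ q`. -/
theorem chase_sound_and_complete (Sg : List TGD) (D : Set DFact)
    (hD : IsDatabase D) (q : BCQ) :
    entailsCQ Sg D q ↔ satCQ (chase Sg D) q := by
  constructor
  · intro hent
    apply hent
    · intro f hf
      exact Set.mem_iUnion.2 ⟨0, hf⟩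
    · intro σ hσ h hbody
      obtain ⟨i, hi⟩ : ∃ i, Sg[i]? = some σ := by
        obtain ⟨i, hlt, he⟩ := List.mem_iff_getElem.1 hσ
        exact ⟨i, by rw [List.getElem?_eq_some_iff]; exact ⟨hlt, he⟩⟩
      obtain ⟨N, hN⟩ := exists_chase_bound Sg D h σ.body hbody
      refine ⟨skolemSub i σ h, fun v hv => by simp [skolemSub, hv], ?_⟩
      intro a ha
      refine Set.mem_iUnion.2 ⟨N + 1, ?_⟩
      exact Set.mem_union_right _ ⟨i, σ, hi, h, hN, a, ha, rfl⟩
  · rintro ⟨hq, hqsat⟩ I hDI hM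
    obtain ⟨N, hN⟩ := exists_chase_bound Sg D hq q hqsat
    refine ⟨fun v => gmap Sg I (hq v), fun a ha => ?_⟩
    rw [← mapDFact_applyAtom _ (gmap_const Sg I)]
    exact gmap_hom Sg D I hD hDI hM N _ (hN a ha)
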